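/- Let γ : I → ℂ*, γ(s) = r(s)e^{iφ(s)}, be a closed smooth regular curve parameterized by arclength satisfying r' = cos(θ−φ) and θ' − φ' = (r/2 − n/r) sin(θ−φ), where θ is the angle of γ' with the x-axis (so that γ∗ψ defines a closed self-shrinker). Then ∫_γ ((1/2)r² − n) r^{n−1} e^{−r²/4} ds = 0 and ∫_γ (1/(2r²) − n/r⁴) r^{n−1} e^{−r²/4} ds = −∫_γ (4cos²(θ−φ)/r⁴) r^{n−1} e^{−r²/4} ds. -/

import Mathlib

/-!
Along a solution of the shrinker system, `F_k = cos(θ-φ) r^k e^{-r²/4}` satisfies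
`F_k' = -((r²/2 - n) + (n - k) cos²(θ-φ)) r^{k-1} e^{-r²/4}`. On a closed curve `r = |γ|` and
`r cos(θ-φ) = Re(γ' γ̄)` are periodic, so each `F_k'` integrates to zero over a period;
`k = n` gives the first identity and `k = n - 4` the second.
-/

open Complex in
theorem re_exp_mul_I_mul_conj_polar (ρ θ φ : ℝ) :
    (exp (θ * I) * (starRingEnd ℂ) (ρ * exp (φ * I))).re = ρ * Real.cos (θ - φ) := by
  rw [map_mul, conj_ofReal, ← exp_conj, map_mul, conj_ofReal, conj_I, mul_left_comm,
    ← Complex.exp_add, show (θ : ℂ) * I + φ * -I = (θ - φ : ℝ) * I by push_cast; ring,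
    re_ofReal_mul, exp_ofReal_mul_I_re]

section ClosedPolarCurve

variable {γ : ℝ → ℂ} {r θ φ : ℝ → ℝ} {L : ℝ}
  (hpolar : ∀ s, γ s = (r s : ℂ) * Complex.exp ((φ s : ℂ) * Complex.I))
  (hrpos : ∀ s, 0 < r s) (hper : Function.Periodic γ L)

include hpolar hrpos hper in
theorem periodic_radius_of_polar : Function.Periodic r L := by
  have hnorm : ∀ s, ‖γ s‖ = r s := fun s => by simp [hpolar s, abs_of_pos (hrpos s)]
  intro s
  rw [← hnorm, ← hnorm, hper s]

include hpolar hrpos hper in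
theorem periodic_cos_sub_of_polar
    (hper' : Function.Periodic (fun s => Complex.exp ((θ s : ℂ) * Complex.I)) L) :
    Function.Periodic (fun s => Real.cos (θ s - φ s)) L := by
  have hre : ∀ s, r s * Real.cos (θ s - φ s)
      = (Complex.exp ((θ s : ℂ) * Complex.I) * (starRingEnd ℂ) (γ s)).re := fun s => by
    rw [hpolar s, re_exp_mul_I_mul_conj_polar]
  intro s
  have hθ : Complex.exp ((θ (s + L) : ℂ) * Complex.I) = Complex.exp ((θ s : ℂ) * Complex.I) :=
    hper' s
  have h := hre (s + L)
  rw [periodic_radius_of_polar hpolar hrpos hper s, hθ, hper s, ← hre s] at h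
  exact mul_left_cancel₀ (hrpos s).ne' h

end ClosedPolarCurve

section ShrinkerSystem

variable {r x : ℝ → ℝ} {c : ℝ}
  (hr : ∀ s, HasDerivAt r (Real.cos (x s)) s)
  (hx : ∀ s, HasDerivAt x ((r s / 2 - c / r s) * Real.sin (x s)) s)
  (hr0 : ∀ s, r s ≠ 0)

include hr hx hr0 in
theorem hasDerivAt_cos_mul_zpow_mul_exp (k : ℤ) (s : ℝ) :
    HasDerivAt (fun u => Real.cos (x u) * r u ^ k * Real.exp (-(r u ^ 2) / 4))
      (-((r s ^ 2 / 2 - c) + (c - k) * Real.cos (x s) ^ 2)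
        * r s ^ (k - 1) * Real.exp (-(r s ^ 2) / 4)) s := by
  have hcos := (hx s).cos
  have hzpow := (hasDerivAt_zpow k (r s) (Or.inl (hr0 s))).comp s (hr s)
  have hexp := ((((hr s).pow 2).neg).div_const 4).exp
  refine ((hcos.mul hzpow).mul hexp).congr_deriv ?_
  have hk : r s ^ k = r s ^ (k - 1) * r s := by
    rw [zpow_sub_one₀ (hr0 s), inv_mul_cancel_right₀ (hr0 s)]
  have hsin := Real.sin_sq_add_cos_sq (x s)
  simp only [Function.comp_apply, Pi.mul_apply, Pi.neg_apply, Pi.pow_apply, hk]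
  field_simp [hr0 s]
  linear_combination (-4 * (r s ^ 2 - 2 * c)) * hsin

include hr hx hr0 in
theorem integral_shrinker_eq_zero {a b : ℝ} (hrb : r b = r a)
    (hxb : Real.cos (x b) = Real.cos (x a)) (k : ℤ) :
    ∫ s in a..b, ((r s ^ 2 / 2 - c) + (c - k) * Real.cos (x s) ^ 2)
        * r s ^ (k - 1) * Real.exp (-(r s ^ 2) / 4) = 0 := by
  have hr_cont : Continuous r := continuous_iff_continuousAt.2 fun s => (hr s).continuousAt
  have hx_cont : Continuous x := continuous_iff_continuousAt.2 fun s => (hx s).continuousAt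
  have hint := intervalIntegral.integral_eq_sub_of_hasDerivAt
    (fun s _ => hasDerivAt_cos_mul_zpow_mul_exp hr hx hr0 k s)
    (Continuous.intervalIntegrable (by fun_prop (disch := simp [hr0])) a b)
  rw [hrb, hxb, sub_self] at hint
  simpa only [neg_mul, intervalIntegral.integral_neg, neg_eq_zero] using hint

end ShrinkerSystem

theorem closed_shrinker_curve_integral_identities_general
    (n : ℕ) (hn : 2 ≤ n)
    (γ : ℝ → ℂ) (r θ φ : ℝ → ℝ) (L : ℝ)
    -- `γ = r e^{iφ}` does not pass through the origin:
    (hpolar : ∀ s, γ s = (r s : ℂ) * Complex.exp ((φ s : ℂ) * Complex.I))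
    (hrpos : ∀ s, 0 < r s)
    -- `γ` is a closed curve of period `L`:
    (hper : Function.Periodic γ L)
    (hper' : Function.Periodic (fun s => Complex.exp ((θ s : ℂ) * Complex.I)) L)
    -- the self-shrinker ODE system:
    (hODE₁ : ∀ s, HasDerivAt r (Real.cos (θ s - φ s)) s)
    (hODE₂ : ∀ s, HasDerivAt (fun u => θ u - φ u)
      ((r s / 2 - n / r s) * Real.sin (θ s - φ s)) s) :
    (∫ s in (0:ℝ)..L,
        ((1/2) * r s ^ 2 - n) * r s ^ (n - 1) * Real.exp (-(r s ^ 2) / 4)) = 0 ∧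
    (∫ s in (0:ℝ)..L,
        (1 / (2 * r s ^ 2) - n / r s ^ 4) * r s ^ (n - 1) * Real.exp (-(r s ^ 2) / 4))
      = -∫ s in (0:ℝ)..L,
          (4 * Real.cos (θ s - φ s) ^ 2 / r s ^ 4) * r s ^ (n - 1)
            * Real.exp (-(r s ^ 2) / 4) := by
  have hr0 : ∀ s, r s ≠ 0 := fun s => (hrpos s).ne'
  have hrL : r L = r 0 := by simpa using periodic_radius_of_polar hpolar hrpos hper 0
  have hxL : Real.cos (θ L - φ L) = Real.cos (θ 0 - φ 0) := by
    simpa using periodic_cos_sub_of_polar hpolar hrpos hper hper' 0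
  have hzero := integral_shrinker_eq_zero hODE₁ hODE₂ hr0 hrL hxL
  have hpow : ∀ s, r s ^ (n - 1) = r s ^ ((n : ℤ) - 1) := fun s => by
    rw [← zpow_natCast, Nat.cast_sub (by omega), Nat.cast_one]
  constructor
  · refine (intervalIntegral.integral_congr fun s _ => ?_).trans (hzero n)
    simp only [hpow, Int.cast_natCast]
    ring
  · have hr_cont : Continuous r := continuous_iff_continuousAt.2 fun s => (hODE₁ s).continuousAt
    have hx_cont : Continuous fun s => θ s - φ s :=
      continuous_iff_continuousAt.2 fun s => (hODE₂ s).continuousAt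
    rw [eq_neg_iff_add_eq_zero, ← intervalIntegral.integral_add
      (Continuous.intervalIntegrable (by fun_prop (disch := simp [hr0])) 0 L)
      (Continuous.intervalIntegrable (by fun_prop (disch := simp [hr0])) 0 L)]
    refine (intervalIntegral.integral_congr fun s _ => ?_).trans (hzero (n - 4))
    simp only [hpow, show (n : ℤ) - 4 - 1 = (n : ℤ) - 1 - 4 by ring, zpow_sub₀ (hr0 s) _ 4]
    field_simp
    push_cast
    ring

/-- Proposition 4.3 of Lee–Lue.
Let `γ : I → ℂ*`, `γ(s) = r(s)e^{iφ(s)}`, be a closed smooth regular curve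
parameterized by arclength (so that `γ'(s) = e^{iθ(s)}`, where `θ` is the angle
of the tangent with the `x`-axis), of period `L`, satisfying the self-shrinker
ODE system `r' = cos(θ-φ)`, `θ' - φ' = (r/2 - n/r) sin(θ-φ)` (so that for any
minimal Legendrian `ψ : M^{n-1} → S^{2n-1}`, `γ∗ψ` defines a closed
self-shrinker in `ℂ^n`).  Then
`∫_γ ((1/2)r² - n) r^{n-1} e^{-r²/4} ds = 0` and
`∫_γ (1/(2r²) - n/r⁴) r^{n-1} e^{-r²/4} ds
   = -∫_γ (4cos²(θ-φ)/r⁴) r^{n-1} e^{-r²/4} ds`. -/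
theorem closed_shrinker_curve_integral_identities
    (n : ℕ) (hn : 2 ≤ n)
    (γ : ℝ → ℂ) (r θ φ : ℝ → ℝ) (L : ℝ) (hL : 0 < L)
    -- `γ = r e^{iφ}` does not pass through the origin:
    (hpolar : ∀ s, γ s = (r s : ℂ) * Complex.exp ((φ s : ℂ) * Complex.I))
    (hrpos : ∀ s, 0 < r s)
    -- `γ` is parameterized by arclength, with tangent angle `θ`:
    (harc : ∀ s, HasDerivAt γ (Complex.exp ((θ s : ℂ) * Complex.I)) s)
    -- `γ` is a closed curve of period `L`:
    (hper : Function.Periodic γ L)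
    (hper' : Function.Periodic (fun s => Complex.exp ((θ s : ℂ) * Complex.I)) L)
    -- the self-shrinker ODE system:
    (hODE₁ : ∀ s, HasDerivAt r (Real.cos (θ s - φ s)) s)
    (hODE₂ : ∀ s, HasDerivAt (fun u => θ u - φ u)
      ((r s / 2 - n / r s) * Real.sin (θ s - φ s)) s) :
    (∫ s in (0:ℝ)..L,
        ((1/2) * r s ^ 2 - n) * r s ^ (n - 1) * Real.exp (-(r s ^ 2) / 4)) = 0 ∧
    (∫ s in (0:ℝ)..L,
        (1 / (2 * r s ^ 2) - n / r s ^ 4) * r s ^ (n - 1) * Real.exp (-(r s ^ 2) / 4))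
      = -∫ s in (0:ℝ)..L,
          (4 * Real.cos (θ s - φ s) ^ 2 / r s ^ 4) * r s ^ (n - 1)
            * Real.exp (-(r s ^ 2) / 4) :=
  closed_shrinker_curve_integral_identities_general n hn γ r θ φ L hpolar hrpos hper hper' hODE₁
    hODE₂
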